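/- Deduction-like theorem for BD_△: for all formulas ρ, σ, τ in the language over {¬, ∧, ∨, △}, we have ρ, σ ⊨_BD τ if and only if ρ ⊨_BD ¬△σ ∨ τ. -/
import Mathlib


inductive FV | T | B | N | F
deriving DecidableEq

open FV

def fneg : FV → FV
  | T => F | F => T | B => B | N => N

def fand : FV → FV → FV
  | T, x => x
  | x, T => x
  | F, _ => F
  | _, F => F
  | B, B => B
  | N, N => N
  | B, N => F
  | N, B => F

def forr : FV → FV → FV
  | F, x => x
  | x, F => x
  | T, _ => T
  | _, T => T
  | B, B => B
  | N, N => N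
  | B, N => T
  | N, B => T

def fcirc : FV → FV
  | T => T | F => T | B => F | N => F

def ftri : FV → FV
  | T => T | B => T | N => F | F => F

inductive Fm
  | var : ℕ → Fm
  | neg : Fm → Fm
  | conj : Fm → Fm → Fm
  | disj : Fm → Fm → Fm
  | circ : Fm → Fm
  | tri : Fm → Fm

def eval (v : ℕ → FV) : Fm → FV
  | .var p => v p
  | .neg φ => fneg (eval v φ)
  | .conj φ χ => fand (eval v φ) (eval v χ)
  | .disj φ χ => forr (eval v φ) (eval v χ)
  | .circ φ => fcirc (eval v φ)
  | .tri φ => ftri (eval v φ)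

/-- designated values -/
def desig (x : FV) : Prop := x = T ∨ x = B

/-- formulas over {¬,∧,∨} -/
def isBD : Fm → Prop
  | .var _ => True
  | .neg φ => isBD φ
  | .conj φ χ => isBD φ ∧ isBD χ
  | .disj φ χ => isBD φ ∧ isBD χ
  | .circ _ => False
  | .tri _ => False

/-- formulas over {¬,∧,∨,∘} -/
def isCircFm : Fm → Prop
  | .var _ => True
  | .neg φ => isCircFm φ
  | .conj φ χ => isCircFm φ ∧ isCircFm χ
  | .disj φ χ => isCircFm φ ∧ isCircFm χ
  | .circ φ => isCircFm φ
  | .tri _ => False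

/-- formulas over {¬,∧,∨,△} -/
def isTriFm : Fm → Prop
  | .var _ => True
  | .neg φ => isTriFm φ
  | .conj φ χ => isTriFm φ ∧ isTriFm χ
  | .disj φ χ => isTriFm φ ∧ isTriFm χ
  | .circ _ => False
  | .tri φ => isTriFm φ

/-- BD entailment between single formulas -/
def ent (φ χ : Fm) : Prop := ∀ v, desig (eval v φ) → desig (eval v χ)

/-- classical (two-valued) evaluation of {¬,∧,∨}-formulas -/
def evalC (b : ℕ → Bool) : Fm → Bool
  | .var p => b p
  | .neg φ => !(evalC b φ)
  | .conj φ χ => evalC b φ && evalC b χ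
  | .disj φ χ => evalC b φ || evalC b χ
  | .circ φ => evalC b φ
  | .tri φ => evalC b φ


theorem deduction_tri (ρ σ τ : Fm) (hρ : isTriFm ρ) (hσ : isTriFm σ) (hτ : isTriFm τ) :
    (∀ v, desig (eval v ρ) → desig (eval v σ) → desig (eval v τ)) ↔
    ent ρ (.disj (.neg (.tri σ)) τ) := by
  constructor
  · intro h v hv
    simp only [eval]
    rcases hs : eval v σ with _ | _ | _ | _ <;>
    rcases ht : eval v τ with _ | _ | _ | _ <;>
      first
        | (left; rfl) | (right; rfl)
        | (exfalso; have := h v hv (by rw [hs]; first | exact Or.inl rfl | exact Or.inr rfl);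
           rw [ht] at this; rcases this with h' | h' <;> cases h')
  · intro h v hv hs
    have := h v hv
    simp only [eval] at this
    rcases hss : eval v σ with _ | _ | _ | _ <;> rw [hss] at this hs <;>
      rcases ht : eval v τ with _ | _ | _ | _ <;> rw [ht] at this <;>
        simp_all [desig, ftri, fneg, forr]
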